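/- Let P_t be a probability measure on X such that φ is Bochner integrable with respect to P_t, and set μ_t = ∫ φ dP_t. Then for every δ ∈ (0,1), with probability at least 1 − δ over an i.i.d. sample z_1,…,z_{n_t} from P_t, the empirical embedding mean satisfies ‖ (1/n_t) Σ_{i=1}^{n_t} φ(z_i) − μ_t ‖ ≤ √(M/n_t) · (1 + √(2 log(1/δ))). -/

import Mathlib

/-!
Write `S z = ‖(1/n) ∑ φ (z i) - μ‖` for a sample `z` of size `n`. Since the centred features
`φ (z i) - μ` are independent with mean zero, the cross terms vanish and
`E ‖∑ (φ (z i) - μ)‖² = n E ‖φ - μ‖² ≤ n M`, so `E S ≤ √(M / n)` by Jensen. Replacing one sample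
point moves `S` by at most `2 √M / n`, so by McDiarmid's inequality `S - E S` is sub-Gaussian with
variance proxy `M / n`, and the Chernoff bound gives `S - E S < √(M / n) √(2 log (1 / δ))` with
probability at least `1 - δ`. McDiarmid's inequality is proved by induction on `n`: integrating
out the first coordinate, the fluctuation around the conditional mean is sub-Gaussian by
Hoeffding's lemma, and the conditional mean again has bounded differences.
-/

open MeasureTheory ProbabilityTheory Real
open scoped RealInnerProductSpace BigOperators NNReal

section Product

variable {X : Type*} [MeasurableSpace X]

theorem measurable_fin_cons {n : ℕ} :
    Measurable fun q : X × (Fin n → X) ↦ (Fin.cons q.1 q.2 : Fin (n + 1) → X) := by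
  refine measurable_pi_lambda _ fun i ↦ ?_
  cases i using Fin.cases with
  | zero => simp only [Fin.cons_zero]; fun_prop
  | succ i => simp only [Fin.cons_succ]; fun_prop

theorem integral_pi_fin_succ {E : Type*} [NormedAddCommGroup E] [NormedSpace ℝ E]
    (P : Measure X) [SigmaFinite P] {n : ℕ} {F : (Fin (n + 1) → X) → E}
    (hF : Integrable F (Measure.pi fun _ ↦ P)) :
    ∫ z, F z ∂(Measure.pi fun _ ↦ P) = ∫ w, ∫ x, F (Fin.cons x w) ∂P ∂(Measure.pi fun _ ↦ P) := by
  let e := MeasurableEquiv.piFinSuccAbove (fun _ : Fin (n + 1) ↦ X) 0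
  have he : MeasurePreserving e.symm (P.prod (Measure.pi fun _ ↦ P)) (Measure.pi fun _ ↦ P) :=
    (measurePreserving_piFinSuccAbove (fun _ ↦ P) 0).symm
  have hcons : ⇑e.symm = fun q ↦ Fin.cons q.1 q.2 := by
    ext q : 1
    simp [e, MeasurableEquiv.piFinSuccAbove_symm_apply, Fin.insertNthEquiv, Fin.insertNth_zero']
  rw [← he.integral_comp e.symm.measurableEmbedding, hcons]
  exact integral_prod_symm _ (hcons ▸ (he.integrable_comp_emb e.symm.measurableEmbedding).2 hF)

theorem memLp_sum_comp_eval {E : Type*} [NormedAddCommGroup E] (P : Measure X)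
    [IsProbabilityMeasure P] {p : ENNReal} {Y : X → E} (hY : MemLp Y p P) (n : ℕ) :
    MemLp (fun z : Fin n → X ↦ ∑ i, Y (z i)) p (Measure.pi fun _ ↦ P) := by
  simpa [Finset.sum_fn] using memLp_finsetSum' Finset.univ fun i _ ↦
    hY.comp_measurePreserving (measurePreserving_eval (fun _ ↦ P) i)

end Product

theorem exists_forall_mem_Icc_of_forall_sub_le {α : Type*} {h : α → ℝ} {c : ℝ}
    (hc : ∀ x y, h x - h y ≤ c) : ∃ a, ∀ x, h x ∈ Set.Icc a (a + c) := by
  rcases isEmpty_or_nonempty α with hα | hα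
  · exact ⟨0, isEmptyElim⟩
  have x₀ : α := Classical.arbitrary α
  have hbdd : BddBelow (Set.range h) := ⟨h x₀ - c, by rintro _ ⟨x, rfl⟩; linarith [hc x₀ x]⟩
  refine ⟨⨅ x, h x, fun x ↦ ⟨ciInf_le hbdd x, ?_⟩⟩
  have : h x - c ≤ ⨅ y, h y := le_ciInf fun y ↦ by linarith [hc x y]
  linarith

theorem hasSubgaussianMGF_sub_integral_of_forall_sub_le {X : Type*} [MeasurableSpace X]
    {P : Measure X} [IsProbabilityMeasure P] {h : X → ℝ} (hh : Measurable h) {c : ℝ}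
    (hc : ∀ x y, h x - h y ≤ c) :
    HasSubgaussianMGF (fun x ↦ h x - ∫ y, h y ∂P) ((‖c‖₊ / 2) ^ 2) P := by
  obtain ⟨a, ha⟩ := exists_forall_mem_Icc_of_forall_sub_le hc
  simpa using hasSubgaussianMGF_of_mem_Icc hh.aemeasurable (ae_of_all P ha)


section BoundedDifferences

variable {X : Type*}

def HasBoundedDifferences {ι : Type*} [DecidableEq ι] (f : (ι → X) → ℝ) (c : ℝ) : Prop :=
  ∀ z i x, f (Function.update z i x) - f z ≤ c

namespace HasBoundedDifferences

variable {n : ℕ} {f : (Fin (n + 1) → X) → ℝ} {c : ℝ}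

theorem cons_sub_cons_le (hf : HasBoundedDifferences f c) (w : Fin n → X) (x y : X) :
    f (Fin.cons x w) - f (Fin.cons y w) ≤ c := by
  simpa using hf (Fin.cons y w) 0 x

variable [MeasurableSpace X] {P : Measure X} [IsProbabilityMeasure P]

theorem integral_cons (hf : HasBoundedDifferences f c)
    (hint : ∀ w, Integrable (fun x ↦ f (Fin.cons x w)) P) :
    HasBoundedDifferences (fun w ↦ ∫ x, f (Fin.cons x w) ∂P) c := fun w i y ↦ by
  rw [← integral_sub (hint _) (hint w)]
  refine (integral_mono ((hint _).sub (hint w)) (integrable_const c) fun x ↦ ?_).trans (by simp)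
  simpa [Fin.cons_update] using hf (Fin.cons x w) i.succ y

end HasBoundedDifferences

variable [MeasurableSpace X] {P : Measure X} [IsProbabilityMeasure P]

theorem hasSubgaussianMGF_pi_succ {n : ℕ} {f : (Fin (n + 1) → X) → ℝ} {g : (Fin n → X) → ℝ}
    {m : ℝ} {k k' : ℝ≥0}
    (hexp : ∀ t, Integrable (fun z ↦ exp (t * (f z - m))) (Measure.pi fun _ ↦ P))
    (hinner : ∀ w, HasSubgaussianMGF (fun x ↦ f (Fin.cons x w) - g w) k P)
    (houter : HasSubgaussianMGF (fun w ↦ g w - m) k' (Measure.pi fun _ ↦ P)) :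
    HasSubgaussianMGF (fun z ↦ f z - m) (k' + k) (Measure.pi fun _ ↦ P) := by
  refine ⟨hexp, fun t ↦ ?_⟩
  calc mgf (fun z ↦ f z - m) (Measure.pi fun _ ↦ P) t
      = ∫ w, ∫ x, exp (t * (f (Fin.cons x w) - m)) ∂P ∂(Measure.pi fun _ ↦ P) :=
        integral_pi_fin_succ P (hexp t)
    _ = ∫ w, exp (t * (g w - m)) * mgf (fun x ↦ f (Fin.cons x w) - g w) P t
          ∂(Measure.pi fun _ ↦ P) := by
        refine integral_congr_ae (ae_of_all _ fun w ↦ ?_)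
        simp only [mgf, ← integral_const_mul, ← exp_add]
        congr 1 with x
        ring_nf
    _ ≤ ∫ w, exp (t * (g w - m)) * exp (k * t ^ 2 / 2) ∂(Measure.pi fun _ ↦ P) :=
        integral_mono_of_nonneg (ae_of_all _ fun w ↦ mul_nonneg (exp_nonneg _) mgf_nonneg)
          ((houter.integrable_exp_mul t).mul_const _)
          (ae_of_all _ fun w ↦ mul_le_mul_of_nonneg_left ((hinner w).mgf_le t) (exp_nonneg _))
    _ = mgf (fun w ↦ g w - m) (Measure.pi fun _ ↦ P) t * exp (k * t ^ 2 / 2) :=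
        integral_mul_const _ _
    _ ≤ exp (k' * t ^ 2 / 2) * exp (k * t ^ 2 / 2) := by
        gcongr; exact houter.mgf_le t
    _ = exp (↑(k' + k) * t ^ 2 / 2) := by
        rw [← exp_add]
        congr 1
        push_cast
        ring

theorem hasSubgaussianMGF_sub_integral_pi_of_hasBoundedDifferences {c : ℝ} :
    ∀ {n : ℕ} {f : (Fin n → X) → ℝ} {B : ℝ}, Measurable f → (∀ z, |f z| ≤ B) →
      HasBoundedDifferences f c →
      HasSubgaussianMGF (fun z ↦ f z - ∫ z', f z' ∂(Measure.pi fun _ ↦ P)) (n * (‖c‖₊ / 2) ^ 2)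
        (Measure.pi fun _ ↦ P)
  | 0, f, _, _, _, _ => by
    have hf : f = fun _ ↦ f isEmptyElim := funext fun z ↦ congrArg f (Subsingleton.elim _ _)
    rw [hf]
    simp
  | n + 1, f, B, hf, hB, hc => by
    set m := ∫ z, f z ∂(Measure.pi fun _ ↦ P)
    have hcons : ∀ w, Measurable fun x ↦ f (Fin.cons x w) := fun w ↦
      hf.comp (measurable_fin_cons.comp measurable_prodMk_right)
    have hint : ∀ w, Integrable (fun x ↦ f (Fin.cons x w)) P := fun w ↦
      .of_bound (hcons w).aestronglyMeasurable B (ae_of_all _ fun x ↦ hB _)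
    set g : (Fin n → X) → ℝ := fun w ↦ ∫ x, f (Fin.cons x w) ∂P
    have hg_meas : Measurable g :=
      (hf.comp measurable_fin_cons).stronglyMeasurable.integral_prod_left'.measurable
    have hg_bound : ∀ w, |g w| ≤ B := fun w ↦ by
      simpa using norm_integral_le_of_norm_le_const (μ := P) (f := fun x ↦ f (Fin.cons x w))
        (ae_of_all _ fun x ↦ hB (Fin.cons x w))
    have hm : m = ∫ w, g w ∂(Measure.pi fun _ ↦ P) :=
      integral_pi_fin_succ P (.of_bound hf.aestronglyMeasurable B (ae_of_all _ hB))
    have houter := hasSubgaussianMGF_sub_integral_pi_of_hasBoundedDifferences hg_meas hg_bound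
      (hc.integral_cons hint)
    rw [← hm] at houter
    have hexp : ∀ t, Integrable (fun z ↦ exp (t * (f z - m))) (Measure.pi fun _ ↦ P) :=
      fun t ↦ integrable_exp_mul_of_mem_Icc (a := -B - m) (b := B - m)
        (hf.sub_const m).aemeasurable (ae_of_all _ fun z ↦ by
          have := abs_le.1 (hB z); constructor <;> linarith)
    convert hasSubgaussianMGF_pi_succ hexp (fun w ↦
      hasSubgaussianMGF_sub_integral_of_forall_sub_le (hcons w) (hc.cons_sub_cons_le w)) houter
      using 1
    push_cast
    ring

end BoundedDifferences

theorem integral_sub_integral_eq_zero {X E : Type*} [MeasurableSpace X] [NormedAddCommGroup E]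
    [NormedSpace ℝ E] [CompleteSpace E] {P : Measure X} [IsProbabilityMeasure P] {φ : X → E}
    (hφ : Integrable φ P) :
    ∫ x, (φ x - ∫ y, φ y ∂P) ∂P = 0 := by
  simp [integral_sub hφ (integrable_const _)]

section Hilbert

variable {X : Type*} [MeasurableSpace X] {H : Type*} [NormedAddCommGroup H]
  [InnerProductSpace ℝ H] [CompleteSpace H] {P : Measure X} [IsProbabilityMeasure P]

theorem integral_norm_add_sq_of_integral_eq_zero {Y : X → H} (hY : MemLp Y 2 P)
    (h0 : ∫ x, Y x ∂P = 0) (v : H) :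
    ∫ x, ‖Y x + v‖ ^ 2 ∂P = ∫ x, ‖Y x‖ ^ 2 ∂P + ‖v‖ ^ 2 := by
  have hY1 : Integrable Y P := hY.integrable one_le_two
  have hY2 : Integrable (fun x ↦ ‖Y x‖ ^ 2) P := hY.integrable_norm_pow two_ne_zero
  have hinner : Integrable (fun x ↦ 2 * ⟪v, Y x⟫) P := (hY1.const_inner v).const_mul 2
  simp_rw [norm_add_sq_real, real_inner_comm v]
  rw [integral_add (f := fun x ↦ ‖Y x‖ ^ 2 + 2 * ⟪v, Y x⟫) (hY2.add hinner) (integrable_const _),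
    integral_add hY2 hinner, integral_const_mul, integral_inner hY1, h0]
  simp

theorem integral_norm_sub_integral_sq_le {φ : X → H} (hφ : MemLp φ 2 P) :
    ∫ x, ‖φ x - ∫ y, φ y ∂P‖ ^ 2 ∂P ≤ ∫ x, ‖φ x‖ ^ 2 ∂P := by
  have := integral_norm_add_sq_of_integral_eq_zero (Y := fun x ↦ φ x - ∫ y, φ y ∂P)
    (hφ.sub (memLp_const _))
    (integral_sub_integral_eq_zero (hφ.integrable one_le_two)) (∫ y, φ y ∂P)
  simp only [sub_add_cancel] at this
  rw [this]
  exact le_add_of_nonneg_right (sq_nonneg _)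

theorem integral_norm_sum_sq_pi {Y : X → H} (hY : MemLp Y 2 P) (h0 : ∫ x, Y x ∂P = 0) (n : ℕ) :
    ∫ z, ‖∑ i, Y (z i)‖ ^ 2 ∂(Measure.pi fun _ : Fin n ↦ P) = n * ∫ x, ‖Y x‖ ^ 2 ∂P := by
  induction n with
  | zero => simp
  | succ n ih =>
    have hS := memLp_sum_comp_eval P hY n
    rw [integral_pi_fin_succ P
      ((memLp_sum_comp_eval P hY (n + 1)).integrable_norm_pow two_ne_zero)]
    simp only [Fin.sum_univ_succ, Fin.cons_zero, Fin.cons_succ,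
      integral_norm_add_sq_of_integral_eq_zero hY h0]
    rw [integral_add (integrable_const _) (hS.integrable_norm_pow two_ne_zero), ih,
      integral_const, probReal_univ, one_smul, Nat.cast_succ]
    ring

end Hilbert

theorem integral_le_sqrt_integral_sq {Ω : Type*} [MeasurableSpace Ω] {μ : Measure Ω}
    [IsProbabilityMeasure μ] {f : Ω → ℝ} (hf : MemLp f 2 μ) :
    ∫ x, f x ∂μ ≤ √(∫ x, f x ^ 2 ∂μ) := by
  have hvar := variance_eq_sub hf ▸ variance_nonneg f μ
  exact (le_abs_self _).trans (Real.abs_le_sqrt (by simpa using hvar))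

theorem ProbabilityTheory.HasSubgaussianMGF.measureReal_ge_sqrt_two_mul_log_le {Ω : Type*}
    [MeasurableSpace Ω] {μ : Measure Ω} {Y : Ω → ℝ} {c : ℝ≥0} (h : HasSubgaussianMGF Y c μ)
    (hc : 0 < c) {δ : ℝ} (hδ : 0 < δ) (hδ1 : δ ≤ 1) :
    μ.real {ω | √c * √(2 * log (1 / δ)) ≤ Y ω} ≤ δ := by
  have hlog : 0 ≤ log (1 / δ) := log_nonneg (one_le_one_div hδ hδ1)
  refine (h.measure_ge_le (by positivity)).trans_eq ?_
  rw [mul_pow, Real.sq_sqrt c.coe_nonneg, Real.sq_sqrt (by positivity), one_div, log_inv]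
  have : (c : ℝ) ≠ 0 := by positivity
  field_simp
  rw [exp_log hδ]

theorem ofReal_one_sub_le_of_compl_subset {Ω : Type*} [MeasurableSpace Ω] {μ : Measure Ω}
    [IsProbabilityMeasure μ] {A B : Set Ω} {δ : ℝ} (hB : μ.real B ≤ δ) (hBA : Bᶜ ⊆ A) :
    ENNReal.ofReal (1 - δ) ≤ μ A := by
  rw [← ofReal_measureReal]
  refine ENNReal.ofReal_le_ofReal ?_
  have := measureReal_union_le (μ := μ) B Bᶜ
  rw [Set.union_compl_self, probReal_univ] at this
  linarith [measureReal_mono (μ := μ) hBA]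

section EmpiricalMean

variable {X : Type*} {H : Type*} [NormedAddCommGroup H] [InnerProductSpace ℝ H]

-- For `n = 0` this is `0`, since `1 / 0 = 0` in `ℝ`.
noncomputable def empiricalMean (φ : X → H) {n : ℕ} (z : Fin n → X) : H :=
  (1 / (n : ℝ)) • ∑ i, φ (z i)

theorem empiricalMean_sub_const (φ : X → H) {n : ℕ} (hn : 0 < n) (z : Fin n → X) (v : H) :
    empiricalMean φ z - v = empiricalMean (fun x ↦ φ x - v) z := by
  have : ((1 / (n : ℝ)) * n) • v = v := by field_simp; simp
  simp only [empiricalMean, Finset.sum_sub_distrib, smul_sub, Finset.sum_const, Finset.card_univ,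
    Fintype.card_fin, ← Nat.cast_smul_eq_nsmul ℝ, smul_smul, this]

theorem empiricalMean_update_sub (φ : X → H) {n : ℕ} (z : Fin n → X) (i : Fin n) (x : X) :
    empiricalMean φ (Function.update z i x) - empiricalMean φ z
      = (1 / (n : ℝ)) • (φ x - φ (z i)) := by
  rw [empiricalMean, empiricalMean, ← smul_sub]
  congr 1
  simp only [Function.apply_update (fun _ ↦ φ), Finset.sum_update_of_mem (Finset.mem_univ i),
    Finset.sum_eq_add_sum_sdiff_singleton_of_mem (Finset.mem_univ i) (fun j ↦ φ (z j))]
  abel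

theorem norm_empiricalMean_le {φ : X → H} {b : ℝ} (hφ : ∀ x, ‖φ x‖ ≤ b) {n : ℕ} (hn : 0 < n)
    (z : Fin n → X) : ‖empiricalMean φ z‖ ≤ b := by
  have hn' : (0 : ℝ) < n := Nat.cast_pos.2 hn
  calc ‖empiricalMean φ z‖ ≤ (1 / (n : ℝ)) * ∑ i, ‖φ (z i)‖ := by
        rw [empiricalMean, norm_smul, Real.norm_of_nonneg (by positivity)]
        gcongr
        exact norm_sum_le _ _
    _ ≤ (1 / (n : ℝ)) * ∑ _i : Fin n, b := by gcongr; exact hφ _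
    _ = b := by simp [field]

theorem norm_empiricalMean_update_sub_le {φ : X → H} {b : ℝ} (hφ : ∀ x, ‖φ x‖ ≤ b) {n : ℕ}
    (z : Fin n → X) (i : Fin n) (x : X) :
    ‖empiricalMean φ (Function.update z i x) - empiricalMean φ z‖ ≤ 2 * b / n := by
  rw [empiricalMean_update_sub, norm_smul, Real.norm_of_nonneg (by positivity), one_div_mul_eq_div]
  gcongr
  linarith [norm_sub_le (φ x) (φ (z i)), hφ x, hφ (z i)]

variable [MeasurableSpace X]

theorem stronglyMeasurable_empiricalMean {φ : X → H} (hφ : StronglyMeasurable φ) (n : ℕ) :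
    StronglyMeasurable fun z : Fin n → X ↦ empiricalMean φ z :=
  (Finset.stronglyMeasurable_fun_sum _ fun i _ ↦
    hφ.comp_measurable (measurable_pi_apply i)).const_smul _

variable {P : Measure X} [IsProbabilityMeasure P]

theorem hasSubgaussianMGF_norm_empiricalMean_sub {φ : X → H} (hφm : StronglyMeasurable φ) {b : ℝ}
    (hφ : ∀ x, ‖φ x‖ ≤ b) {n : ℕ} (hn : 0 < n) (v : H) :
    HasSubgaussianMGF (fun z : Fin n → X ↦ ‖empiricalMean φ z - v‖
        - ∫ z', ‖empiricalMean φ z' - v‖ ∂(Measure.pi fun _ : Fin n ↦ P))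
      (‖b‖₊ ^ 2 / n) (Measure.pi fun _ ↦ P) := by
  have hparam : (n : ℝ≥0) * (‖2 * b / n‖₊ / 2) ^ 2 = ‖b‖₊ ^ 2 / n := by
    ext
    push_cast
    rw [norm_div, norm_mul, Real.norm_two, RCLike.norm_natCast]
    field_simp
  rw [← hparam]
  refine hasSubgaussianMGF_sub_integral_pi_of_hasBoundedDifferences (B := b + ‖v‖)
    ((stronglyMeasurable_empiricalMean hφm n).sub stronglyMeasurable_const).norm.measurable
    (fun z ↦ ?_) fun z i x ↦ (norm_sub_norm_le _ _).trans ?_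
  · rw [abs_norm]
    linarith [norm_sub_le (empiricalMean φ z) v, norm_empiricalMean_le hφ hn z]
  · simpa using norm_empiricalMean_update_sub_le hφ z i x

theorem measureReal_norm_empiricalMean_sub_ge_le {φ : X → H} (hφm : StronglyMeasurable φ) {b : ℝ}
    (hb : 0 < b) (hφ : ∀ x, ‖φ x‖ ≤ b) {n : ℕ} (hn : 0 < n) (v : H) {δ : ℝ} (hδ : 0 < δ)
    (hδ1 : δ ≤ 1) :
    (Measure.pi fun _ ↦ P).real {z : Fin n → X | b / √n * √(2 * log (1 / δ)) ≤
      ‖empiricalMean φ z - v‖ - ∫ z' : Fin n → X, ‖empiricalMean φ z' - v‖ ∂(Measure.pi fun _ ↦ P)}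
      ≤ δ := by
  have hproxy : √(‖b‖₊ ^ 2 / n : ℝ≥0) = b / √n := by
    rw [NNReal.coe_div, NNReal.coe_pow, coe_nnnorm, Real.norm_of_nonneg hb.le, NNReal.coe_natCast,
      Real.sqrt_div' _ n.cast_nonneg, Real.sqrt_sq hb.le]
  have hproxy_pos : 0 < ‖b‖₊ ^ 2 / (n : ℝ≥0) :=
    div_pos (pow_pos (nnnorm_pos.2 hb.ne') 2) (Nat.cast_pos.2 hn)
  have h := HasSubgaussianMGF.measureReal_ge_sqrt_two_mul_log_le
    (hasSubgaussianMGF_norm_empiricalMean_sub (P := P) hφm hφ hn v) hproxy_pos hδ hδ1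
  rwa [hproxy] at h

variable [CompleteSpace H]

theorem integral_norm_empiricalMean_sub_sq {φ : X → H} (hφ : MemLp φ 2 P) {n : ℕ} (hn : 0 < n) :
    ∫ z, ‖empiricalMean φ z - ∫ x, φ x ∂P‖ ^ 2 ∂(Measure.pi fun _ : Fin n ↦ P)
      = (∫ x, ‖φ x - ∫ y, φ y ∂P‖ ^ 2 ∂P) / n := by
  simp_rw [empiricalMean_sub_const φ hn, empiricalMean, norm_smul, mul_pow]
  rw [integral_const_mul, integral_norm_sum_sq_pi (Y := fun x ↦ φ x - ∫ y, φ y ∂P)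
    (hφ.sub (memLp_const _))
    (integral_sub_integral_eq_zero (hφ.integrable one_le_two))]
  simp [field]

theorem integral_norm_empiricalMean_sub_le {φ : X → H} (hφ : MemLp φ 2 P) {n : ℕ} (hn : 0 < n) :
    ∫ z, ‖empiricalMean φ z - ∫ x, φ x ∂P‖ ∂(Measure.pi fun _ : Fin n ↦ P)
      ≤ √((∫ x, ‖φ x‖ ^ 2 ∂P) / n) := by
  have hmemLp : MemLp (fun z : Fin n → X ↦ ‖empiricalMean φ z - ∫ x, φ x ∂P‖) 2
      (Measure.pi fun _ ↦ P) := by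
    simp_rw [empiricalMean_sub_const φ hn, empiricalMean]
    exact ((memLp_sum_comp_eval P (hφ.sub (memLp_const _)) n).const_smul _).norm
  calc _ ≤ √(∫ z, ‖empiricalMean φ z - ∫ x, φ x ∂P‖ ^ 2 ∂(Measure.pi fun _ : Fin n ↦ P)) :=
        integral_le_sqrt_integral_sq hmemLp
    _ ≤ √((∫ x, ‖φ x‖ ^ 2 ∂P) / n) := by
        rw [integral_norm_empiricalMean_sub_sq hφ hn]
        exact Real.sqrt_le_sqrt
          (div_le_div_of_nonneg_right (integral_norm_sub_integral_sq_le hφ) n.cast_nonneg)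

theorem integral_norm_empiricalMean_sub_le_of_norm_le {φ : X → H}
    (hφm : AEStronglyMeasurable φ P) {b : ℝ} (hφ : ∀ x, ‖φ x‖ ≤ b) {n : ℕ} (hn : 0 < n) :
    ∫ z, ‖empiricalMean φ z - ∫ x, φ x ∂P‖ ∂(Measure.pi fun _ : Fin n ↦ P) ≤ b / √n := by
  obtain ⟨x₀⟩ := nonempty_of_isProbabilityMeasure P
  have hb : 0 ≤ b := (norm_nonneg _).trans (hφ x₀)
  have hsq : ∫ x, ‖φ x‖ ^ 2 ∂P ≤ b ^ 2 :=
    (integral_mono_of_nonneg (ae_of_all _ fun _ ↦ sq_nonneg _) (integrable_const _)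
      (ae_of_all _ fun x ↦ pow_le_pow_left₀ (norm_nonneg _) (hφ x) 2)).trans_eq (by simp)
  calc _ ≤ √((∫ x, ‖φ x‖ ^ 2 ∂P) / n) :=
        integral_norm_empiricalMean_sub_le (.of_bound hφm b (ae_of_all _ hφ)) hn
    _ ≤ √(b ^ 2 / n) := Real.sqrt_le_sqrt (div_le_div_of_nonneg_right hsq n.cast_nonneg)
    _ = b / √n := by rw [Real.sqrt_div' _ n.cast_nonneg, Real.sqrt_sq hb]

end EmpiricalMean

theorem embedding_mean_concentration_general
    {X : Type*} [MeasurableSpace X]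
    {H : Type*} [NormedAddCommGroup H] [InnerProductSpace ℝ H] [CompleteSpace H]
    (M : ℝ) (hM : 0 < M)
    (φ : X → H) (hφsm : StronglyMeasurable φ) (hφ : ∀ x, ‖φ x‖ ≤ Real.sqrt M)
    (Pt : Measure X) [IsProbabilityMeasure Pt]
    (nt : ℕ) (hnt : 0 < nt)
    (μt : H) (hμt : μt = ∫ x, φ x ∂Pt)
    (δ : ℝ) (hδ : δ ∈ Set.Ioo (0 : ℝ) 1) :
    (Measure.pi fun _ : Fin nt => Pt)
      {zs | ‖(1 / (nt : ℝ)) • ∑ i, φ (zs i) - μt‖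
          ≤ Real.sqrt (M / nt) * (1 + Real.sqrt (2 * Real.log (1 / δ)))}
      ≥ ENNReal.ofReal (1 - δ) := by
  obtain ⟨hδ0, hδ1⟩ := hδ
  subst hμt
  have hmean := integral_norm_empiricalMean_sub_le_of_norm_le (P := Pt)
    hφsm.aestronglyMeasurable hφ hnt
  have htail := measureReal_norm_empiricalMean_sub_ge_le (P := Pt) hφsm (Real.sqrt_pos.2 hM) hφ hnt
    (∫ x, φ x ∂Pt) hδ0 hδ1.le
  refine ofReal_one_sub_le_of_compl_subset htail fun z hz ↦ ?_
  simp only [Set.mem_compl_iff, Set.mem_ofPred_eq, not_le] at hz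
  show ‖empiricalMean φ z - _‖ ≤ _
  rw [Real.sqrt_div' _ (Nat.cast_nonneg nt), mul_add, mul_one]
  linarith

/-- With probability at least `1 − δ` over an i.i.d. sample of size `n_t` from `P_t`,
the empirical embedding mean is within `√(M/n_t) (1 + √(2 log(1/δ)))` of the
population embedding mean `μ_t`. -/
theorem embedding_mean_concentration
    {X : Type*} [MeasurableSpace X]
    {H : Type*} [NormedAddCommGroup H] [InnerProductSpace ℝ H] [CompleteSpace H]
    (M : ℝ) (hM : 0 < M)
    (φ : X → H) (hφsm : StronglyMeasurable φ) (hφ : ∀ x, ‖φ x‖ ≤ Real.sqrt M)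
    (Pt : Measure X) [IsProbabilityMeasure Pt]
    (hint : Integrable φ Pt)
    (nt : ℕ) (hnt : 0 < nt)
    (μt : H) (hμt : μt = ∫ x, φ x ∂Pt)
    (δ : ℝ) (hδ : δ ∈ Set.Ioo (0 : ℝ) 1) :
    (Measure.pi fun _ : Fin nt => Pt)
      {zs | ‖(1 / (nt : ℝ)) • ∑ i, φ (zs i) - μt‖
          ≤ Real.sqrt (M / nt) * (1 + Real.sqrt (2 * Real.log (1 / δ)))}
      ≥ ENNReal.ofReal (1 - δ) :=
  embedding_mean_concentration_general M hM φ hφsm hφ Pt nt hnt μt hμt δ hδ
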